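/- arXiv:2203.12791 — 2 statements merged into one kernel-verified Lean document; each statement's English description precedes it below -/
import Mathlib

section
/- Let χ be the non-principal Dirichlet character mod 4. Assume that the partial sums ∑_{p ≤ x} log(1 − χ(p)/√p)^{-1} remain bounded as x → ∞ (a consequence of the Deep Riemann Hypothesis for L(s,χ)). Then ∑_{p ≤ x} χ(p)/√p = −(1/2)·log log x + O(1) as x → ∞. -/
/-- The non-principal Dirichlet character mod 4, as a function on ℕ. -/
noncomputable def chiFour (n : ℕ) : ℝ :=
  if n % 4 = 1 then 1 else if n % 4 = 3 then -1 else 0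

/-
Expanding `log (1 - t)⁻¹ = t + t² / 2 + O(|t|³)` at `t = χ(p) / √p`, the cubic terms are
`O(p^(-3/2))` and sum to `O(1)`, while `χ(p)² = 1` for odd `p`. Hence the bounded sum of
`log (1 - χ(p) / √p)⁻¹` equals `∑ χ(p) / √p + ½ ∑ 1 / p + O(1)`, and Mertens' second theorem
`∑_{p ≤ x} 1 / p = log log x + O(1)` gives the claim.

Mertens' second theorem follows from the first one, `∑_{p ≤ N} log p / p = log N + O(1)`, by
partial summation against `1 / log n`. The first one compares Legendre's formula
`log N! = ∑_{p ≤ N} v_p(N!) log p`, with `N / p - 1 ≤ v_p(N!) ≤ N / (p - 1)`, against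
`N log N - N ≤ log N! ≤ N log N` and Chebyshev's bound `∑_{p ≤ N} log p ≤ N log 4`.
-/

open Finset Real
open scoped Nat

lemma summable_nat_rpow_neg_three_halves : Summable fun n : ℕ => (n : ℝ) ^ (-(3 / 2) : ℝ) :=
  Real.summable_nat_rpow.mpr (by norm_num)

lemma log_div_mul_sub_one_le {x : ℝ} (hx : 2 ≤ x) :
    log x / (x * (x - 1)) ≤ 4 * x ^ (-(3 / 2) : ℝ) := by
  have hx0 : 0 < x := by linarith
  have hsqrt : x ^ (1 / 2 : ℝ) = x ^ (-(3 / 2) : ℝ) * x ^ 2 := by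
    rw [← rpow_natCast, ← rpow_add hx0]; norm_num
  have hlog : log x ≤ 2 * x ^ (1 / 2 : ℝ) := by
    have := Real.log_le_rpow_div hx0.le (show (0 : ℝ) < 1 / 2 by norm_num)
    linarith
  have hs : 0 < x ^ (-(3 / 2) : ℝ) := rpow_pos_of_pos hx0 _
  rw [div_le_iff₀ (by nlinarith)]
  rw [hsqrt] at hlog
  nlinarith [mul_le_mul_of_nonneg_left (show x ^ 2 ≤ 2 * (x * (x - 1)) by nlinarith) hs.le]

lemma log_factorial_eq_sum_primesLE (N : ℕ) :
    log (N ! : ℝ) = ∑ p ∈ Nat.primesLE N, (padicValNat p N ! : ℝ) * log p := by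
  rw [Real.log_nat_eq_sum_factorization, Finsupp.sum_of_support_subset _ ?_ _ (by simp)]
  · exact sum_congr rfl fun p hp => by rw [Nat.factorization_def _ (Nat.mem_primesLE.mp hp).2]
  · intro p hp
    rw [Nat.support_factorization, Nat.mem_primeFactors] at hp
    exact Nat.mem_primesLE.mpr ⟨hp.1.dvd_factorial.mp hp.2.1, hp.1⟩

lemma div_sub_one_le_padicValNat_factorial {p : ℕ} (hp : p.Prime) (N : ℕ) :
    (N : ℝ) / p - 1 ≤ padicValNat p N ! := by
  have := Fact.mk hp
  have hdiv : N / p ≤ padicValNat p N ! := by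
    rw [padicValNat_factorial (lt_add_one (Nat.log p N))]
    rcases Nat.lt_or_ge N p with hNp | hpN
    · simp [Nat.div_eq_of_lt hNp]
    · have h1 : 1 ∈ Ico 1 (Nat.log p N + 1) := by simp [Nat.log_pos hp.one_lt hpN]
      simpa using single_le_sum (f := fun i => N / p ^ i) (fun _ _ => Nat.zero_le _) h1
  calc (N : ℝ) / p - 1 ≤ ⌊(N : ℝ) / p⌋₊ := (Nat.sub_one_lt_floor _).le
    _ = (N / p : ℕ) := by rw [Nat.floor_div_eq_div]
    _ ≤ padicValNat p N ! := by exact_mod_cast hdiv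

lemma padicValNat_factorial_le_div_sub_one {p : ℕ} (hp : p.Prime) (N : ℕ) :
    (padicValNat p N ! : ℝ) ≤ N / (p - 1) := by
  have := Fact.mk hp
  have h : (p - 1) * padicValNat p N ! ≤ N := by
    rw [sub_one_mul_padicValNat_factorial]; exact Nat.sub_le _ _
  have hp1 : (1 : ℝ) < p := by exact_mod_cast hp.one_lt
  rw [le_div_iff₀ (by linarith), mul_comm]
  have hcast := (Nat.cast_le (α := ℝ)).mpr h
  rwa [Nat.cast_mul, Nat.cast_sub hp.one_le, Nat.cast_one] at hcast

lemma sum_primesLE_log_div_le {N : ℕ} (hN : 0 < N) :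
    ∑ p ∈ Nat.primesLE N, log p / p ≤ log N + log 4 := by
  have hN' : (0 : ℝ) < N := by exact_mod_cast hN
  have hchebyshev : ∑ p ∈ Nat.primesLE N, log p ≤ N * log 4 := by
    rw [← Chebyshev.theta_eq_sum_primesLE_log, mul_comm]
    exact Chebyshev.theta_le_log4_mul_x N.cast_nonneg
  have hlegendre : ∑ p ∈ Nat.primesLE N, ((N : ℝ) / p - 1) * log p ≤ log (N ! : ℝ) := by
    rw [log_factorial_eq_sum_primesLE]
    refine sum_le_sum fun p hp => ?_
    have hp := (Nat.mem_primesLE.mp hp).2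
    exact mul_le_mul_of_nonneg_right (div_sub_one_le_padicValNat_factorial hp N)
      (log_nonneg (by exact_mod_cast hp.one_le))
  have hfactorial : log (N ! : ℝ) ≤ N * log N := by
    rw [← log_pow]
    exact log_le_log (by positivity) (by exact_mod_cast Nat.factorial_le_pow N)
  have hsplit : ∑ p ∈ Nat.primesLE N, ((N : ℝ) / p - 1) * log p
      = N * ∑ p ∈ Nat.primesLE N, log p / p - ∑ p ∈ Nat.primesLE N, log p := by
    rw [mul_sum, ← sum_sub_distrib]
    exact sum_congr rfl fun p _ => by ring
  refine le_of_mul_le_mul_left ?_ hN'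
  linarith

lemma log_sub_le_sum_primesLE_log_div {N : ℕ} (hN : 0 < N) :
    log N - 1 - 4 * ∑' n : ℕ, (n : ℝ) ^ (-(3 / 2) : ℝ) ≤ ∑ p ∈ Nat.primesLE N, log p / p := by
  have hN' : (0 : ℝ) < N := by exact_mod_cast hN
  have hlegendre : log (N ! : ℝ) ≤ ∑ p ∈ Nat.primesLE N, (N : ℝ) / (p - 1) * log p := by
    rw [log_factorial_eq_sum_primesLE]
    refine sum_le_sum fun p hp => ?_
    have hp := (Nat.mem_primesLE.mp hp).2
    exact mul_le_mul_of_nonneg_right (padicValNat_factorial_le_div_sub_one hp N)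
      (log_nonneg (by exact_mod_cast hp.one_le))
  have hstirling : N * log N - N ≤ log (N ! : ℝ) := by
    have := Stirling.le_log_factorial_stirling hN.ne'
    have : 0 ≤ log (2 * π) := log_nonneg (by linarith [pi_gt_three])
    have : 0 ≤ log N := log_nonneg (by exact_mod_cast hN)
    linarith
  have hsplit : ∑ p ∈ Nat.primesLE N, (N : ℝ) / (p - 1) * log p
      = N * (∑ p ∈ Nat.primesLE N, log p / p
        + ∑ p ∈ Nat.primesLE N, log p / (p * (p - 1))) := by
    rw [← sum_add_distrib, mul_sum]
    refine sum_congr rfl fun p hp => ?_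
    have hp : (2 : ℝ) ≤ p := by exact_mod_cast (Nat.mem_primesLE.mp hp).2.two_le
    have hp1 : (p : ℝ) - 1 ≠ 0 := by linarith
    field_simp
    ring
  have htail : ∑ p ∈ Nat.primesLE N, log p / (p * (p - 1))
      ≤ 4 * ∑' n : ℕ, (n : ℝ) ^ (-(3 / 2) : ℝ) := by
    calc ∑ p ∈ Nat.primesLE N, log p / (p * (p - 1))
        ≤ ∑ p ∈ Nat.primesLE N, 4 * (p : ℝ) ^ (-(3 / 2) : ℝ) :=
          sum_le_sum fun p hp => log_div_mul_sub_one_le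
            (by exact_mod_cast (Nat.mem_primesLE.mp hp).2.two_le)
      _ ≤ 4 * ∑' n : ℕ, (n : ℝ) ^ (-(3 / 2) : ℝ) := by
          rw [← mul_sum]
          gcongr
          exact summable_nat_rpow_neg_three_halves.sum_le_tsum _ fun _ _ => by positivity
  have := mul_le_mul_of_nonneg_left htail hN'.le
  refine le_of_mul_le_mul_left ?_ hN'
  linarith

theorem exists_abs_sum_primesLE_log_div_sub_log_le :
    ∃ C, ∀ N : ℕ, 0 < N → |∑ p ∈ Nat.primesLE N, log p / p - log N| ≤ C := by
  set K := ∑' n : ℕ, (n : ℝ) ^ (-(3 / 2) : ℝ)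
  refine ⟨max (log 4) (1 + 4 * K), fun N hN => abs_le.mpr ⟨?_, ?_⟩⟩
  · linarith [log_sub_le_sum_primesLE_log_div hN, le_max_right (log 4) (1 + 4 * K)]
  · linarith [sum_primesLE_log_div_le hN, le_max_left (log 4) (1 + 4 * K)]

lemma abs_log_sub_log_sub_mul_inv_sub_inv_le {L M : ℝ} (hL : 0 < L) (hLM : L ≤ M)
    (hML : M ≤ L + 1) : |log M - log L - L * (L⁻¹ - M⁻¹)| ≤ L⁻¹ - M⁻¹ := by
  have hM : 0 < M := hL.trans_le hLM
  have hu : 0 ≤ L⁻¹ - M⁻¹ := sub_nonneg.mpr (inv_anti₀ hL hLM)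
  have hlower := one_sub_inv_le_log_of_pos (div_pos hM hL)
  have hupper := log_le_sub_one_of_pos (div_pos hM hL)
  rw [log_div hM.ne' hL.ne'] at hlower hupper
  have hinv : 1 - (M / L)⁻¹ = L * (L⁻¹ - M⁻¹) := by field_simp
  have hsub : M / L - 1 = L * (L⁻¹ - M⁻¹) + (M - L) * (L⁻¹ - M⁻¹) := by field_simp; ring
  have hsmall : (M - L) * (L⁻¹ - M⁻¹) ≤ L⁻¹ - M⁻¹ :=
    mul_le_of_le_one_left hu (by linarith)
  rw [abs_le]
  constructor <;> linarith

lemma log_succ_le_log_add_one {n : ℕ} (hn : 1 ≤ n) : log ((n + 1 : ℕ) : ℝ) ≤ log n + 1 := by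
  have hn' : (1 : ℝ) ≤ n := by exact_mod_cast hn
  calc log ((n + 1 : ℕ) : ℝ) ≤ log (2 * n) := log_le_log (by positivity) (by push_cast; linarith)
    _ = log 2 + log n := log_mul two_ne_zero (by positivity)
    _ ≤ log n + 1 := by linarith [log_two_lt_d9]

lemma abs_sub_le_sub_of_abs_sub_succ_le {D f : ℕ → ℝ} {m N : ℕ} (hmN : m ≤ N)
    (h : ∀ n, m ≤ n → |D (n + 1) - D n| ≤ f n - f (n + 1)) : |D N - D m| ≤ f m - f N := by
  induction N, hmN using Nat.le_induction with
  | base => simp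
  | succ N hmN ih => linarith [abs_sub_le (D (N + 1)) (D N) (D m), h N hmN]

theorem exists_abs_sum_div_log_sub_log_log_le {a : ℕ → ℝ} {C : ℝ}
    (ha : ∀ n, 2 ≤ n → |∑ k ∈ range (n + 1), a k - log n| ≤ C) :
    ∃ C', ∀ N, 2 ≤ N → |∑ k ∈ range (N + 1), a k / log k - log (log N)| ≤ C' := by
  set A : ℕ → ℝ := fun n => ∑ k ∈ range (n + 1), a k
  set D : ℕ → ℝ := fun n => ∑ k ∈ range (n + 1), a k / log k - A n / log n - log (log n)
  have hC : 0 ≤ C := (abs_nonneg _).trans (ha 2 le_rfl)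
  have hlog : ∀ n : ℕ, 2 ≤ n → 0 < log n := fun n hn => log_pos (by exact_mod_cast hn)
  have hstep : ∀ n, 2 ≤ n → |D (n + 1) - D n|
      ≤ (C + 1) * (log n)⁻¹ - (C + 1) * (log ((n + 1 : ℕ) : ℝ))⁻¹ := by
    intro n hn
    set L := log n
    set M := log ((n + 1 : ℕ) : ℝ)
    have hLM : L ≤ M := log_le_log (Nat.cast_pos.mpr (by omega)) (by push_cast; linarith)
    have hu : 0 ≤ L⁻¹ - M⁻¹ := sub_nonneg.mpr (inv_anti₀ (hlog n hn) hLM)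
    have hDstep : D (n + 1) - D n
        = (A n - log n) * (L⁻¹ - M⁻¹) - (log M - log L - L * (L⁻¹ - M⁻¹)) := by
      simp only [D, A, sum_range_succ _ (n + 1)]
      ring
    have hloglog := abs_log_sub_log_sub_mul_inv_sub_inv_le (hlog n hn) hLM
      (log_succ_le_log_add_one (by omega))
    have hA := mul_le_mul_of_nonneg_right (ha n hn) hu
    rw [hDstep]
    refine (abs_sub _ _).trans ?_
    rw [abs_mul, abs_of_nonneg hu]
    linarith
  refine ⟨|D 2| + (2 * C + 1) * (log 2)⁻¹ + 1, fun N hN => ?_⟩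
  have hD := abs_le.mp (abs_sub_le_sub_of_abs_sub_succ_le hN hstep)
  have hinvN : 0 ≤ (C + 1) * (log N)⁻¹ := by have := hlog N hN; positivity
  have hsplit : ∑ k ∈ range (N + 1), a k / log k - log (log N)
      = D N + 1 + (A N - log N) * (log N)⁻¹ := by
    simp only [D]
    field_simp [(hlog N hN).ne']
    ring
  have hrem : |(A N - log N) * (log N)⁻¹| ≤ C * (log 2)⁻¹ := by
    rw [abs_mul, abs_inv, abs_of_pos (hlog N hN)]
    gcongr
    · exact ha N hN
    · exact_mod_cast hN
  rw [hsplit, abs_le]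
  simp only [Nat.cast_ofNat] at hD
  constructor <;> linarith [abs_le.mp hrem, neg_abs_le (D 2), le_abs_self (D 2)]

theorem exists_abs_sum_primesLE_inv_sub_log_log_le :
    ∃ C, ∀ N : ℕ, 2 ≤ N → |∑ p ∈ Nat.primesLE N, (p : ℝ)⁻¹ - log (log N)| ≤ C := by
  obtain ⟨C, hC⟩ := exists_abs_sum_primesLE_log_div_sub_log_le
  have hsum (N : ℕ) : ∑ p ∈ Nat.primesLE N, log p / p
      = ∑ k ∈ range (N + 1), if k.Prime then log k / k else 0 := sum_filter _ _
  obtain ⟨C', hC'⟩ := exists_abs_sum_div_log_sub_log_log_le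
    (a := fun k => if k.Prime then log k / k else 0) (C := C)
    fun n hn => hsum n ▸ hC n (by omega)
  refine ⟨C', fun N hN => ?_⟩
  convert hC' N hN using 3
  rw [Nat.primesLE, Nat.primesBelow, sum_filter]
  refine sum_congr rfl fun k _ => ?_
  split_ifs with hk
  · have : log k ≠ 0 := (log_pos (by exact_mod_cast hk.one_lt)).ne'
    field_simp
  · simp

lemma abs_chiFour_le_one (n : ℕ) : |chiFour n| ≤ 1 := by
  unfold chiFour
  split_ifs <;> norm_num

lemma chiFour_sq_of_prime {p : ℕ} (hp : p.Prime) (h2 : p ≠ 2) : chiFour p ^ 2 = 1 := by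
  have hodd := Nat.odd_iff.mp (hp.odd_of_ne_two h2)
  have : p % 4 = 1 ∨ p % 4 = 3 := by omega
  rcases this with h | h <;> simp [chiFour, h]

lemma sum_primesLE_chiFour_sq_div {N : ℕ} (hN : 2 ≤ N) :
    ∑ p ∈ Nat.primesLE N, chiFour p ^ 2 / p = ∑ p ∈ Nat.primesLE N, (p : ℝ)⁻¹ - 2⁻¹ := by
  have h2 : 2 ∈ Nat.primesLE N := Nat.mem_primesLE.mpr ⟨hN, Nat.prime_two⟩
  rw [← add_sum_erase _ _ h2, ← add_sum_erase _ _ h2]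
  have hodd : ∀ p ∈ (Nat.primesLE N).erase 2, chiFour p ^ 2 / p = (p : ℝ)⁻¹ := fun p hp => by
    obtain ⟨hp2, hp⟩ := mem_erase.mp hp
    rw [chiFour_sq_of_prime (Nat.mem_primesLE.mp hp).2 hp2, one_div]
  rw [sum_congr rfl hodd]
  norm_num [chiFour]

lemma abs_log_inv_one_sub_sub_le {t : ℝ} (ht : |t| ≤ 3 / 4) :
    |log (1 - t)⁻¹ - t - t ^ 2 / 2| ≤ 4 * |t| ^ 3 := by
  have h := abs_log_sub_add_sum_range_le (ht.trans_lt (by norm_num)) 2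
  simp only [sum_range_succ, sum_range_zero] at h
  norm_num at h
  rw [log_inv, show -log (1 - t) - t - t ^ 2 / 2 = -(t + t ^ 2 / 2 + log (1 - t)) by ring,
    abs_neg]
  calc _ ≤ |t| ^ 3 / (1 - |t|) := h
    _ ≤ |t| ^ 3 / (1 / 4) := by gcongr; linarith
    _ = 4 * |t| ^ 3 := by ring

lemma abs_chiFour_div_sqrt_le (p : ℕ) : |chiFour p / √p| ≤ (√p)⁻¹ := by
  rw [abs_div, abs_of_nonneg (sqrt_nonneg _), div_eq_mul_inv]
  exact mul_le_of_le_one_left (by positivity) (abs_chiFour_le_one p)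

lemma inv_sqrt_le_three_quarters {x : ℝ} (hx : 2 ≤ x) : (√x)⁻¹ ≤ 3 / 4 := by
  have : 4 / 3 ≤ √x := le_sqrt_of_sq_le (by linarith)
  rw [inv_le_comm₀ (by positivity) (by norm_num)]
  linarith

lemma inv_sqrt_pow_three {x : ℝ} (hx : 0 ≤ x) : (√x)⁻¹ ^ 3 = x ^ (-(3 / 2) : ℝ) := by
  rw [sqrt_eq_rpow, ← rpow_neg hx, ← rpow_natCast, ← rpow_mul hx]
  norm_num

lemma abs_sum_primesLE_log_inv_one_sub_chiFour_div_sqrt_sub_le {N : ℕ} (hN : 2 ≤ N) :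
    |∑ p ∈ Nat.primesLE N, log (1 - chiFour p / √p)⁻¹ - ∑ p ∈ Nat.primesLE N, chiFour p / √p
        - (∑ p ∈ Nat.primesLE N, (p : ℝ)⁻¹) / 2 + 1 / 4|
      ≤ 4 * ∑' n : ℕ, (n : ℝ) ^ (-(3 / 2) : ℝ) := by
  have hquadratic : ∑ p ∈ Nat.primesLE N, (chiFour p / √p) ^ 2 / 2
      = (∑ p ∈ Nat.primesLE N, (p : ℝ)⁻¹) / 2 - 1 / 4 := by
    have : ∀ p ∈ Nat.primesLE N, (chiFour p / √p) ^ 2 / 2 = chiFour p ^ 2 / p / 2 :=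
      fun p _ => by rw [div_pow, sq_sqrt p.cast_nonneg]
    rw [sum_congr rfl this, ← sum_div, sum_primesLE_chiFour_sq_div hN]
    ring
  have hcubic : ∀ p ∈ Nat.primesLE N, |log (1 - chiFour p / √p)⁻¹ - chiFour p / √p
      - (chiFour p / √p) ^ 2 / 2| ≤ 4 * (p : ℝ) ^ (-(3 / 2) : ℝ) := fun p hp => by
    have hp : (2 : ℝ) ≤ p := by exact_mod_cast (Nat.mem_primesLE.mp hp).2.two_le
    have ht := abs_chiFour_div_sqrt_le p
    refine (abs_log_inv_one_sub_sub_le (ht.trans (inv_sqrt_le_three_quarters hp))).trans ?_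
    rw [← inv_sqrt_pow_three p.cast_nonneg]
    gcongr
  calc _ = |∑ p ∈ Nat.primesLE N, (log (1 - chiFour p / √p)⁻¹ - chiFour p / √p
        - (chiFour p / √p) ^ 2 / 2)| := by
          rw [sum_sub_distrib, sum_sub_distrib, hquadratic]; ring_nf
    _ ≤ ∑ p ∈ Nat.primesLE N, 4 * (p : ℝ) ^ (-(3 / 2) : ℝ) :=
          (abs_sum_le_sum_abs _ _).trans (sum_le_sum hcubic)
    _ ≤ 4 * ∑' n : ℕ, (n : ℝ) ^ (-(3 / 2) : ℝ) := by
          rw [← mul_sum]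
          gcongr
          exact summable_nat_rpow_neg_three_halves.sum_le_tsum _ fun _ _ => by positivity

lemma abs_log_log_sub_log_log_floor_le {x : ℝ} (hx : 2 ≤ x) :
    |log (log x) - log (log ⌊x⌋₊)| ≤ log 2 := by
  have hN : (2 : ℝ) ≤ ⌊x⌋₊ := by exact_mod_cast Nat.le_floor (by exact_mod_cast hx)
  have hNx : (⌊x⌋₊ : ℝ) ≤ x := Nat.floor_le (by linarith)
  have hxN : x ≤ (⌊x⌋₊ : ℝ) ^ 2 := by nlinarith [Nat.lt_floor_add_one x]
  have hlogN : 0 < log ⌊x⌋₊ := log_pos (by linarith)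
  have hlower : log (log ⌊x⌋₊) ≤ log (log x) := log_le_log hlogN (log_le_log (by linarith) hNx)
  have hupper : log (log x) ≤ log 2 + log (log ⌊x⌋₊) := by
    rw [← log_mul two_ne_zero hlogN.ne']
    refine log_le_log (log_pos (by linarith)) ?_
    calc log x ≤ log ((⌊x⌋₊ : ℝ) ^ 2) := log_le_log (by linarith) hxN
      _ = 2 * log ⌊x⌋₊ := by rw [log_pow, Nat.cast_ofNat]
  rw [abs_le]
  constructor <;> linarith [log_nonneg one_le_two]

theorem stmt_3
    (hDRH : ∃ C : ℝ, ∀ x : ℝ, 2 ≤ x →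
      |∑ p ∈ (Finset.range (⌊x⌋₊ + 1)).filter Nat.Prime,
        Real.log (1 - chiFour p / Real.sqrt p)⁻¹| ≤ C) :
    ∃ C : ℝ, ∀ x : ℝ, 3 ≤ x →
      |(∑ p ∈ (Finset.range (⌊x⌋₊ + 1)).filter Nat.Prime, chiFour p / Real.sqrt p) +
        (1 / 2) * Real.log (Real.log x)| ≤ C := by
  obtain ⟨CL, hCL⟩ := hDRH
  obtain ⟨CM, hCM⟩ := exists_abs_sum_primesLE_inv_sub_log_log_le
  set K := ∑' n : ℕ, (n : ℝ) ^ (-(3 / 2) : ℝ)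
  refine ⟨CL + 4 * K + CM / 2 + 1 / 4 + log 2 / 2, fun x hx => ?_⟩
  have hN : 2 ≤ ⌊x⌋₊ := Nat.le_floor (by norm_num; linarith)
  have hlogsum := abs_le.mp
    (show |∑ p ∈ Nat.primesLE ⌊x⌋₊, log (1 - chiFour p / √p)⁻¹| ≤ CL from hCL x (by linarith))
  have htaylor := abs_le.mp (abs_sum_primesLE_log_inv_one_sub_chiFour_div_sqrt_sub_le hN)
  have hmertens := abs_le.mp (hCM _ hN)
  have hfloor := abs_le.mp (abs_log_log_sub_log_log_floor_le (by linarith : (2 : ℝ) ≤ x))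
  show |∑ p ∈ Nat.primesLE ⌊x⌋₊, chiFour p / √p + 1 / 2 * log (log x)| ≤ _
  rw [abs_le]
  constructor <;> linarith
end

section
/- Let M assign to each prime p a unitary matrix of degree r, and suppose: (i) the partial sums of log of the finite Euler products, ∑_{p ≤ x} log det(1 − M(p)p^{-1/2})^{-1}, are O(1) as x → ∞; (ii) (1/2)∑_{p ≤ x} tr(M(p)²)/p divided by log log x tends to δ/2 for a real constant δ. Then ∑_{p ≤ x} tr(M(p))/√p divided by log log x tends to −δ/2 as x → ∞. -/
/-!
If every eigenvalue `a` of `U` has `‖a‖ ≤ 1` (e.g. `U` unitary) and `z` is small, taking the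
logarithm eigenvalue by eigenvalue gives
`log det(1 - zU)⁻¹ = ∑_a log(1 - za)⁻¹ = z tr U + z² tr U² / 2 + O(r ‖z‖³)`.
For `z = p^(-1/2)` the error is `O(p^(-3/2))`, hence summable over primes, so
`∑_{p ≤ x} log det(1 - M(p) p^(-1/2))⁻¹ = ∑_{p ≤ x} tr M(p)/√p + ½ ∑_{p ≤ x} tr M(p)²/p + O(1)`.
After division by `log log x → ∞` the bounded terms vanish, and hypotheses (i) and (ii) give
the limit `-δ/2`.
-/

namespace Complex

lemma norm_log_one_sub_inv_le {w : ℂ} (hw : ‖w‖ ≤ 1 / 2) : ‖log (1 - w)⁻¹‖ ≤ 3 / 2 * ‖w‖ := by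
  have h := norm_log_one_add_half_le_self (z := -w) (by rwa [norm_neg])
  rw [← sub_eq_add_neg, norm_neg] at h
  have hslit : 1 - w ∈ slitPlane := by
    simpa [sub_eq_add_neg] using mem_slitPlane_of_norm_lt_one (z := -w) (by rw [norm_neg]; linarith)
  rwa [log_inv _ (slitPlane_arg_ne_pi hslit), norm_neg]

lemma norm_log_one_sub_inv_sub_quadratic_le {w : ℂ} (hw : ‖w‖ ≤ 1 / 2) :
    ‖log (1 - w)⁻¹ - (w + w ^ 2 / 2)‖ ≤ ‖w‖ ^ 3 := by
  have h := norm_log_one_sub_inv_add_logTaylor_neg_le 2 (z := w) (by linarith)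
  have htaylor : logTaylor (2 + 1) (-w) = -(w + w ^ 2 / 2) := by
    simp only [logTaylor, Finset.sum_range_succ, Finset.sum_range_zero]
    push_cast
    ring
  rw [htaylor, ← sub_eq_add_neg] at h
  refine h.trans ?_
  have hinv : (1 - ‖w‖)⁻¹ ≤ 2 := by
    rw [inv_le_comm₀ (by linarith) two_pos]; linarith
  calc ‖w‖ ^ (2 + 1) * (1 - ‖w‖)⁻¹ / (2 + 1) ≤ ‖w‖ ^ 3 * 2 / 3 := by gcongr; norm_num
    _ ≤ ‖w‖ ^ 3 := by linarith [pow_nonneg (norm_nonneg w) 3]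

end Complex

open Polynomial

namespace Matrix

variable {n : Type*} [Fintype n] [DecidableEq n]

open scoped Matrix.Norms.L2Operator in
lemma norm_eq_one_of_mem_roots_charpoly {U : Matrix n n ℂ} (hU : U ∈ unitaryGroup n ℂ)
    {a : ℂ} (ha : a ∈ U.charpoly.roots) : ‖a‖ = 1 :=
  spectrum.norm_eq_one_of_unitary hU (mem_spectrum_of_isRoot_charpoly (isRoot_of_mem_roots ha))

lemma card_roots_charpoly (A : Matrix n n ℂ) : A.charpoly.roots.card = Fintype.card n := by
  rw [IsAlgClosed.card_roots_eq_natDegree, charpoly_natDegree_eq_dim]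

lemma det_smul_one_sub_eq_prod_roots (A : Matrix n n ℂ) (t : ℂ) :
    (t • 1 - A).det = (A.charpoly.roots.map (t - ·)).prod := by
  rw [← (IsAlgClosed.splits A.charpoly).eval_eq_prod_roots_of_monic A.charpoly_monic, eval_charpoly,
    smul_one_eq_diagonal, scalar_apply]

lemma det_one_sub_smul_eq_prod_roots (A : Matrix n n ℂ) (z : ℂ) :
    (1 - z • A).det = (A.charpoly.roots.map (1 - z * ·)).prod := by
  rcases eq_or_ne z 0 with rfl | hz
  · simp
  have h : (1 : Matrix n n ℂ) - z • A = z • (z⁻¹ • 1 - A) := by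
    rw [smul_sub, smul_smul, mul_inv_cancel₀ hz, one_smul]
  rw [h, det_smul, det_smul_one_sub_eq_prod_roots, ← card_roots_charpoly A,
    ← Multiset.prod_replicate, ← Multiset.map_const', ← Multiset.prod_map_mul]
  congr 1
  refine Multiset.map_congr rfl fun a _ => ?_
  field_simp

lemma charpoly_sq (A : Matrix n n ℂ) :
    (A ^ 2).charpoly = ((A.charpoly.roots.map (· ^ 2)).map (X - C ·)).prod := by
  refine Polynomial.funext fun y => ?_
  obtain ⟨x, rfl⟩ := IsAlgClosed.exists_pow_nat_eq y two_pos
  have hfac : (x ^ 2) • (1 : Matrix n n ℂ) - A ^ 2 = -((x • 1 - A) * ((-x) • 1 - A)) := by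
    simp only [sub_mul, mul_sub, smul_mul, Matrix.mul_smul, one_mul, mul_one, pow_two]
    module
  rw [eval_charpoly, scalar_apply, ← smul_one_eq_diagonal, hfac, det_neg, det_mul,
    det_smul_one_sub_eq_prod_roots, det_smul_one_sub_eq_prod_roots, ← card_roots_charpoly A,
    ← Multiset.prod_replicate, ← Multiset.map_const', ← Multiset.prod_map_mul,
    ← Multiset.prod_map_mul, eval_multiset_prod, Multiset.map_map, Multiset.map_map]
  congr 1
  refine Multiset.map_congr rfl fun a _ => ?_
  simp only [Function.comp_apply, eval_sub, eval_X, eval_C]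
  ring

lemma trace_sq_eq_sum_roots_charpoly (A : Matrix n n ℂ) :
    (A ^ 2).trace = (A.charpoly.roots.map (· ^ 2)).sum := by
  rw [trace_eq_sum_roots_charpoly, charpoly_sq, roots_multiset_prod_X_sub_C]

variable {A : Matrix n n ℂ} {z : ℂ}

lemma log_inv_det_one_sub_smul_eq_sum_roots (hA : ∀ a ∈ A.charpoly.roots, ‖a‖ ≤ 1)
    (hz : ‖z‖ ≤ 1 / 2) (hnz : Fintype.card n * ‖z‖ ≤ 1) :
    Complex.log (1 - z • A).det⁻¹ =
      (A.charpoly.roots.map fun a => Complex.log (1 - z * a)⁻¹).sum := by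
  set g := (A.charpoly.roots.map fun a => Complex.log (1 - z * a)⁻¹).sum
  have hza : ∀ a ∈ A.charpoly.roots, ‖z * a‖ ≤ ‖z‖ := fun a ha => by
    rw [norm_mul]; exact mul_le_of_le_one_right (norm_nonneg z) (hA a ha)
  have hg : ‖g‖ ≤ 3 / 2 := by
    calc ‖g‖ ≤ (A.charpoly.roots.map fun a => ‖Complex.log (1 - z * a)⁻¹‖).sum := by
          rw [← Function.comp_def norm, ← Multiset.map_map]
          exact norm_multiset_sum_le _
      _ ≤ (A.charpoly.roots.map fun _ => 3 / 2 * ‖z‖).sum :=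
          Multiset.sum_map_le_sum_map _ _ fun a ha =>
            (Complex.norm_log_one_sub_inv_le ((hza a ha).trans hz)).trans
              (by gcongr; exact hza a ha)
      _ ≤ 3 / 2 := by
          rw [Multiset.map_const', Multiset.sum_replicate, card_roots_charpoly, nsmul_eq_mul]
          nlinarith
  have hexp : Complex.exp g = (1 - z • A).det⁻¹ := by
    rw [Complex.exp_multiset_sum, Multiset.map_map, det_one_sub_smul_eq_prod_roots,
      ← Multiset.prod_map_inv]
    refine congrArg _ (Multiset.map_congr rfl fun a ha => Complex.exp_log ?_)
    refine inv_ne_zero (sub_ne_zero.2 fun h => ?_)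
    have := (hza a ha).trans hz
    rw [← h, norm_one] at this
    norm_num at this
  have him := (Complex.abs_im_le_norm g).trans hg
  rw [abs_le] at him
  -- `g` has imaginary part in `(-π, π]`, so it is the principal logarithm of `exp g`.
  rw [← hexp, Complex.log_exp] <;> linarith [Real.pi_gt_three]

lemma norm_log_inv_det_one_sub_smul_sub_le (hA : ∀ a ∈ A.charpoly.roots, ‖a‖ ≤ 1)
    (hz : ‖z‖ ≤ 1 / 2) (hnz : Fintype.card n * ‖z‖ ≤ 1) :
    ‖Complex.log (1 - z • A).det⁻¹ - (z * A.trace + z ^ 2 / 2 * (A ^ 2).trace)‖ ≤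
      Fintype.card n * ‖z‖ ^ 3 := by
  have hza : ∀ a ∈ A.charpoly.roots, ‖z * a‖ ≤ ‖z‖ := fun a ha => by
    rw [norm_mul]; exact mul_le_of_le_one_right (norm_nonneg z) (hA a ha)
  have htaylor : z * A.trace + z ^ 2 / 2 * (A ^ 2).trace =
      (A.charpoly.roots.map fun a => z * a + (z * a) ^ 2 / 2).sum := by
    rw [trace_eq_sum_roots_charpoly, trace_sq_eq_sum_roots_charpoly, Multiset.sum_map_add]
    congr 1
    · rw [Multiset.sum_map_mul_left, Multiset.map_id']
    · rw [← Multiset.sum_map_mul_left]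
      congr 2
      ext a
      ring
  rw [log_inv_det_one_sub_smul_eq_sum_roots hA hz hnz, htaylor, ← Multiset.sum_map_sub]
  calc _ ≤ (A.charpoly.roots.map fun a =>
          ‖Complex.log (1 - z * a)⁻¹ - (z * a + (z * a) ^ 2 / 2)‖).sum := by
        rw [← Function.comp_def norm, ← Multiset.map_map]
        exact norm_multiset_sum_le _
    _ ≤ (A.charpoly.roots.map fun _ => ‖z‖ ^ 3).sum :=
        Multiset.sum_map_le_sum_map _ _ fun a ha =>
          (Complex.norm_log_one_sub_inv_sub_quadratic_le ((hza a ha).trans hz)).trans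
            (by gcongr; exact hza a ha)
    _ = Fintype.card n * ‖z‖ ^ 3 := by
        rw [Multiset.map_const', Multiset.sum_replicate, card_roots_charpoly, nsmul_eq_mul]

end Matrix

open Filter Asymptotics Finset

lemma tendsto_div_log_log_of_isBigO_one {G : ℝ → ℂ} (hG : G =O[atTop] fun _ => (1 : ℝ)) :
    Tendsto (fun x => G x / (Real.log (Real.log x) : ℂ)) atTop (nhds 0) := by
  refine (hG.trans_isLittleO ((isLittleO_one_left_iff ℝ).2 ?_)).tendsto_div_nhds_zero
  simp only [Complex.norm_real, Real.norm_eq_abs]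
  exact tendsto_abs_atTop_atTop.comp (Real.tendsto_log_atTop.comp Real.tendsto_log_atTop)

lemma natCast_cpow_neg_half (p : ℕ) : (p : ℂ) ^ (-(1 / 2 : ℂ)) = ((√p : ℝ) : ℂ)⁻¹ := by
  rw [Real.sqrt_eq_rpow, ← Complex.ofReal_natCast, Complex.ofReal_cpow (Nat.cast_nonneg p),
    Complex.cpow_neg]
  norm_num

section EulerFactor

variable {n : Type*} [Fintype n] [DecidableEq n] (M : ℕ → Matrix n n ℂ)

/-- With `z = p^(-1/2)`, the terms `k ≥ 3` of
`log det(1 - z M(p))⁻¹ = ∑_{k ≥ 1} tr(M(p)^k) z^k / k`. -/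
noncomputable def eulerFactorTail (p : ℕ) : ℂ :=
  Complex.log ((1 - (p : ℂ) ^ (-(1 / 2 : ℂ)) • M p).det)⁻¹ -
    (Matrix.trace (M p) / (Real.sqrt p : ℂ) + 1 / 2 * (Matrix.trace ((M p) ^ 2) / (p : ℂ)))

variable {M}

lemma norm_eulerFactorTail_le {p : ℕ} (hM : ∀ a ∈ (M p).charpoly.roots, ‖a‖ ≤ 1) (hp : 4 ≤ p)
    (hnp : Fintype.card n ^ 2 ≤ p) :
    ‖eulerFactorTail M p‖ ≤ Fintype.card n * (p : ℝ) ^ (-(3 / 2) : ℝ) := by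
  set z : ℂ := (p : ℂ) ^ (-(1 / 2 : ℂ)) with hz
  have hsqrt : 2 ≤ √(p : ℝ) := Real.le_sqrt_of_sq_le (by exact_mod_cast (by omega : 2 ^ 2 ≤ p))
  have hnorm : ‖z‖ = (√(p : ℝ))⁻¹ := by
    rw [hz, natCast_cpow_neg_half, norm_inv, Complex.norm_real,
      Real.norm_of_nonneg (Real.sqrt_nonneg _)]
  have hz2 : ‖z‖ ≤ 1 / 2 := by
    rw [hnorm, one_div]; exact inv_anti₀ two_pos hsqrt
  have hnz : Fintype.card n * ‖z‖ ≤ 1 := by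
    rw [hnorm, ← div_eq_mul_inv, div_le_one (by positivity)]
    exact Real.le_sqrt_of_sq_le (by exact_mod_cast hnp)
  have htail : eulerFactorTail M p =
      Complex.log (1 - z • M p).det⁻¹ - (z * (M p).trace + z ^ 2 / 2 * (M p ^ 2).trace) := by
    have hsq : z ^ 2 = (p : ℂ)⁻¹ := by
      rw [hz, natCast_cpow_neg_half, inv_pow, ← Complex.ofReal_pow,
        Real.sq_sqrt (Nat.cast_nonneg p), Complex.ofReal_natCast]
    rw [eulerFactorTail, ← hz, hsq, hz, natCast_cpow_neg_half]
    ring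
  have hcube : ‖z‖ ^ 3 = (p : ℝ) ^ (-(3 / 2) : ℝ) := by
    rw [hnorm, Real.sqrt_eq_rpow, ← Real.rpow_neg (Nat.cast_nonneg p), ← Real.rpow_natCast,
      ← Real.rpow_mul (Nat.cast_nonneg p)]
    norm_num
  rw [htail, ← hcube]
  exact Matrix.norm_log_inv_det_one_sub_smul_sub_le hM hz2 hnz

lemma summable_norm_eulerFactorTail_primes
    (hM : ∀ p : ℕ, p.Prime → ∀ a ∈ (M p).charpoly.roots, ‖a‖ ≤ 1) :
    Summable fun p => ‖if p.Prime then eulerFactorTail M p else 0‖ := by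
  refine Summable.of_norm_bounded_eventually_nat
    ((Real.summable_nat_rpow.2 (by norm_num : -(3 / 2 : ℝ) < -1)).mul_left (Fintype.card n : ℝ)) ?_
  filter_upwards [eventually_ge_atTop 4, eventually_ge_atTop (Fintype.card n ^ 2)] with p hp hnp
  rw [norm_norm]
  split_ifs with hprime
  · exact norm_eulerFactorTail_le (hM p hprime) hp hnp
  · rw [norm_zero]; positivity

lemma isBigO_sum_primes_eulerFactorTail
    (hM : ∀ p : ℕ, p.Prime → ∀ a ∈ (M p).charpoly.roots, ‖a‖ ≤ 1) :
    (fun x : ℝ => ∑ p ∈ (range (⌊x⌋₊ + 1)).filter Nat.Prime, eulerFactorTail M p) =O[atTop]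
      fun _ => (1 : ℝ) := by
  refine IsBigO.of_bound (∑' p, ‖if p.Prime then eulerFactorTail M p else 0‖)
    (Eventually.of_forall fun x => ?_)
  rw [sum_filter, norm_one, mul_one]
  exact (norm_sum_le _ _).trans
    ((summable_norm_eulerFactorTail_primes hM).sum_le_tsum _ fun _ _ => norm_nonneg _)

end EulerFactor

theorem stmt_5 (r : ℕ) (M : ℕ → Matrix (Fin r) (Fin r) ℂ)
    (hM : ∀ p : ℕ, p.Prime → M p ∈ Matrix.unitaryGroup (Fin r) ℂ) (δ : ℝ)
    (hDRH : ∃ C : ℝ, ∀ x : ℝ, 2 ≤ x →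
      ‖∑ p ∈ (Finset.range (⌊x⌋₊ + 1)).filter Nat.Prime,
        Complex.log ((1 - (p : ℂ) ^ (-(1 / 2 : ℂ)) • M p).det)⁻¹‖ ≤ C)
    (hII : Tendsto (fun x : ℝ =>
        ((1 / 2 : ℂ) * ∑ p ∈ (Finset.range (⌊x⌋₊ + 1)).filter Nat.Prime,
          Matrix.trace ((M p) ^ 2) / (p : ℂ)) / (Real.log (Real.log x) : ℂ))
      atTop (nhds ((δ : ℂ) / 2))) :
    Tendsto (fun x : ℝ =>
        (∑ p ∈ (Finset.range (⌊x⌋₊ + 1)).filter Nat.Prime,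
          Matrix.trace (M p) / ((Real.sqrt p : ℂ))) / (Real.log (Real.log x) : ℂ))
      atTop (nhds (-(δ : ℂ) / 2)) := by
  obtain ⟨C, hC⟩ := hDRH
  have hEuler := tendsto_div_log_log_of_isBigO_one (G := fun x : ℝ =>
    ∑ p ∈ (range (⌊x⌋₊ + 1)).filter Nat.Prime,
      Complex.log ((1 - (p : ℂ) ^ (-(1 / 2 : ℂ)) • M p).det)⁻¹)
    <| IsBigO.of_bound C <| by
    filter_upwards [eventually_ge_atTop 2] with x hx
    rw [norm_one, mul_one]
    exact hC x hx
  have hTail := tendsto_div_log_log_of_isBigO_one <| isBigO_sum_primes_eulerFactorTail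
    fun p hp a ha => (Matrix.norm_eq_one_of_mem_roots_charpoly (hM p hp) ha).le
  convert (hEuler.sub hII).sub hTail using 2 with x
  · rw [← sub_div, ← sub_div, mul_sum, ← sum_sub_distrib, ← sum_sub_distrib]
    congr 1
    refine sum_congr rfl fun p _ => ?_
    rw [eulerFactorTail]
    ring
  · ring
end
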